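/- arXiv:0906.3682 — 4 statements merged into one kernel-verified Lean document; each statement's English description precedes it below -/
import Mathlib

section
/- Let ρ > 0, τ ∈ [0,1), β ≥ 1, ω = (1−τ²)/(1+τ²ρ), and χ = √((β−1)²ω²ρ² + 2(1+β)ωρ + 1). Define γ = (ω/2)ρ(β−1) + χ/2 − 1/2. Then γ ≥ 0, and when β = 1 it simplifies to γ = −1/2 + √(ωρ + 1/4). -/
/-! The SINR depends on the channel only through `x = ωρ ≥ 0`, and the radicand exceeds
`(1 - (β - 1)x)²` by exactly `4βx ≥ 0`; so the square root dominates `1 - (β - 1)x`,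
which is precisely `γ ≥ 0`. For `β = 1` the radicand is `4(x + 1/4)`. -/

open Real

/-- The SINR `γ` written in terms of `β` and `x = ωρ`. -/
noncomputable def rzfSINR (β x : ℝ) : ℝ :=
  x / 2 * (β - 1) + √((β - 1) ^ 2 * x ^ 2 + 2 * (1 + β) * x + 1) / 2 - 1 / 2

lemma one_sub_mul_le_sqrt_rzf {β x : ℝ} (hβx : 0 ≤ β * x) :
    1 - x * (β - 1) ≤ √((β - 1) ^ 2 * x ^ 2 + 2 * (1 + β) * x + 1) :=
  le_sqrt_of_sq_le <| by
    have hradicand : (β - 1) ^ 2 * x ^ 2 + 2 * (1 + β) * x + 1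
        = (1 - x * (β - 1)) ^ 2 + 4 * (β * x) := by ring
    linarith

lemma rzfSINR_nonneg {β x : ℝ} (hβx : 0 ≤ β * x) : 0 ≤ rzfSINR β x := by
  have := one_sub_mul_le_sqrt_rzf hβx
  unfold rzfSINR
  linarith

lemma rzfSINR_one (x : ℝ) : rzfSINR 1 x = -(1 / 2) + √(x + 1 / 4) := by
  have hsqrt : √(4 * x + 1) = 2 * √(x + 1 / 4) := by
    rw [show 4 * x + 1 = 2 ^ 2 * (x + 1 / 4) by ring, sqrt_mul (by positivity),
      sqrt_sq zero_le_two]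
  unfold rzfSINR
  rw [show (1 - 1 : ℝ) ^ 2 * x ^ 2 + 2 * (1 + 1) * x + 1 = 4 * x + 1 by ring, hsqrt]
  ring

lemma csit_quality_nonneg {ρ τ : ℝ} (hρ : 0 < ρ) (hτ0 : 0 ≤ τ) (hτ1 : τ < 1) :
    0 ≤ (1 - τ ^ 2) / (1 + τ ^ 2 * ρ) :=
  div_nonneg (by nlinarith) (by positivity)

/-- The deterministic-equivalent SINR `γ` of optimal RZF is nonnegative, and for `β = 1`
it simplifies to `−1/2 + √(ωρ + 1/4)`. -/
theorem orzf_sinr_nonneg_and_beta_one (ρ τ β : ℝ) (hρ : 0 < ρ)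
    (hτ0 : 0 ≤ τ) (hτ1 : τ < 1) (hβ : 1 ≤ β) :
    let ω := (1 - τ ^ 2) / (1 + τ ^ 2 * ρ)
    let χ := Real.sqrt ((β - 1) ^ 2 * ω ^ 2 * ρ ^ 2 + 2 * (1 + β) * ω * ρ + 1)
    let γ := (ω / 2) * ρ * (β - 1) + χ / 2 - 1 / 2
    0 ≤ γ ∧ (β = 1 → γ = -(1 / 2) + Real.sqrt (ω * ρ + 1 / 4)) := by
  intro ω χ γ
  have hγ : γ = rzfSINR β (ω * ρ) := by
    simp only [γ, χ, rzfSINR]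
    ring_nf
  have hωρ : 0 ≤ ω * ρ := mul_nonneg (csit_quality_nonneg hρ hτ0 hτ1) hρ.le
  rw [hγ]
  refine ⟨rzfSINR_nonneg (mul_nonneg (by linarith) hωρ), ?_⟩
  rintro rfl
  exact rzfSINR_one _
end

section
/- Let ρ > 0, β > 1, τ ∈ [0,1). For zero-forcing precoding the deterministic-equivalent per-user rate loss is ΔR(τ) = log₂((1 + ρ(β−1))/(1 + (1−τ²)(β−1)/(τ² + 1/ρ))). Given b > 1, the equation ΔR(τ) = log₂ b has the solution τ² = φ/ρ with φ = (b−1)(1 + ρ(β−1)) / (1 − b + (β−1)(ρ + b)), provided the denominator is positive. -/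
/-! With `D = 1 - b + (β - 1)(ρ + b)` and `τ² = φ/ρ`, one finds
`τ² + 1/ρ = b(β - 1)(1 + ρ)/(ρD)` and `1 - τ² = (1 + ρ)(1 - b + ρ(β - 1))/(ρD)`, so the
distorted SINR `1 + (1 - τ²)(β - 1)/(τ² + 1/ρ)` collapses to `(1 + ρ(β - 1))/b`, and the
ratio inside the logarithm is exactly `b`. -/

section ZeroForcingFeedback

variable {K : Type*} [Field K] {ρ β b : K}

theorem zf_distortion_add_inv (hρ : ρ ≠ 0) (hD : 1 - b + (β - 1) * (ρ + b) ≠ 0) :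
    (b - 1) * (1 + ρ * (β - 1)) / (1 - b + (β - 1) * (ρ + b)) / ρ + 1 / ρ =
      b * (β - 1) * (1 + ρ) / (ρ * (1 - b + (β - 1) * (ρ + b))) := by
  field_simp
  ring

theorem one_sub_zf_distortion (hρ : ρ ≠ 0) (hD : 1 - b + (β - 1) * (ρ + b) ≠ 0) :
    1 - (b - 1) * (1 + ρ * (β - 1)) / (1 - b + (β - 1) * (ρ + b)) / ρ =
      (1 + ρ) * (1 - b + ρ * (β - 1)) / (ρ * (1 - b + (β - 1) * (ρ + b))) := by
  field_simp
  ring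

theorem zf_distorted_sinr_eq (hρ : ρ ≠ 0) (hρ' : 1 + ρ ≠ 0) (hβ : β ≠ 1) (hb : b ≠ 0)
    (hD : 1 - b + (β - 1) * (ρ + b) ≠ 0) :
    let τsq := (b - 1) * (1 + ρ * (β - 1)) / (1 - b + (β - 1) * (ρ + b)) / ρ
    1 + (1 - τsq) * (β - 1) / (τsq + 1 / ρ) = (1 + ρ * (β - 1)) / b := by
  intro τsq
  have hβ' : β - 1 ≠ 0 := sub_ne_zero.mpr hβ
  rw [one_sub_zf_distortion hρ hD, zf_distortion_add_inv hρ hD]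
  field_simp
  ring

end ZeroForcingFeedback

/-- Feedback scaling for ZF (Theorem 6): with `τ² = φ/ρ`,
`φ = (b−1)(1 + ρ(β−1))/(1 − b + (β−1)(ρ + b))`, the per-user rate gap
`ΔR = log₂((1 + ρ(β−1))/(1 + (1−τ²)(β−1)/(τ² + 1/ρ)))` equals `log₂ b`,
provided the denominator of `φ` is positive. -/
theorem zf_rate_gap_solution (ρ β b : ℝ) (hρ : 0 < ρ) (hβ : 1 < β) (hb : 1 < b)
    (hden : 0 < 1 - b + (β - 1) * (ρ + b)) :
    let φ := (b - 1) * (1 + ρ * (β - 1)) / (1 - b + (β - 1) * (ρ + b))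
    let τsq := φ / ρ
    Real.logb 2 ((1 + ρ * (β - 1)) /
        (1 + (1 - τsq) * (β - 1) / (τsq + 1 / ρ))) = Real.logb 2 b := by
  intro φ τsq
  have hsnr : 0 < 1 + ρ * (β - 1) := by nlinarith
  rw [zf_distorted_sinr_eq hρ.ne' (by positivity) hβ.ne' (by linarith) hden.ne',
    div_div_cancel₀ hsnr.ne']
end

section
/- Let a > 1 and set x = (a−1)/e ∈ (0,∞). Let W(x) be the principal branch of the Lambert W function (the unique w ≥ −1 with w·e^w = x). Then β* = (1 − 1/a)(1 + 1/W(x)) is the unique β > 1 solving aβ/(1 + a(β−1)) = ln(1 + a(β−1))/ln 2 · ln 2, i.e. aβ/(1 + a(β−1)) = ln(1 + a(β−1)). Moreover lim_{a→1⁺} β* = e. -/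
open Filter Set Real Topology

/-!
With `t = 1 + a(β - 1)` one has `aβ = t + (a - 1)`, so the optimality condition reads
`t (log t - 1) = a - 1`. Writing `u = log t - 1`, so that `t = e · eᵘ`, this becomes
`u eᵘ = (a - 1)/e > 0`, which forces `u > 0`; as `w ↦ w eʷ` is injective on `[0, ∞)`, this says `u = W((a - 1)/e)`,
i.e. `t = e^{W + 1} = (a - 1)/W`, which solves to `β = β*`. As `a → 1⁺`, `0 < W(x) ≤ x → 0`,
and `β* = (a - 1 + e^{W + 1})/a → e`.
-/

lemma strictMonoOn_mul_exp : StrictMonoOn (fun w : ℝ => w * exp w) (Ici 0) :=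
  fun _ hx _ _ hxy => mul_lt_mul'' hxy (exp_lt_exp.2 hxy) hx (exp_pos _).le

lemma div_eq_log_iff_mul_log_sub_one_eq {a β : ℝ} (ht : 0 < 1 + a * (β - 1)) :
    a * β / (1 + a * (β - 1)) = log (1 + a * (β - 1)) ↔
      (1 + a * (β - 1)) * (log (1 + a * (β - 1)) - 1) = a - 1 := by
  rw [div_eq_iff ht.ne']
  constructor <;> intro h <;> linarith

lemma mul_log_sub_one_eq_iff {t c : ℝ} (ht : 0 < t) :
    t * (log t - 1) = c ↔ (log t - 1) * exp (log t - 1) = c / exp 1 := by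
  rw [exp_sub, exp_log ht, mul_div_assoc', div_left_inj' (exp_pos 1).ne', mul_comm]

lemma eq_div_iff_one_add_mul_sub_one_eq {a β t : ℝ} (ha : a ≠ 0) :
    β = (a - 1 + t) / a ↔ 1 + a * (β - 1) = t := by
  rw [eq_div_iff ha]
  constructor <;> intro h <;> linarith

section LambertW

variable {W : ℝ → ℝ} (hW : ∀ x : ℝ, 0 < x → 0 < W x ∧ W x * exp (W x) = x)
include hW

lemma mul_exp_eq_iff_eq_W {u x : ℝ} (hx : 0 < x) : u * exp u = x ↔ u = W x := by
  obtain ⟨hWpos, hWx⟩ := hW x hx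
  refine ⟨fun hu => ?_, fun hu => hu ▸ hWx⟩
  have hupos : 0 < u := pos_of_mul_pos_left (hu ▸ hx) (exp_pos u).le
  exact strictMonoOn_mul_exp.injOn hupos.le hWpos.le (hu.trans hWx.symm)

lemma exp_W_add_one {x : ℝ} (hx : 0 < x) : exp (W x + 1) = exp 1 * x / W x := by
  obtain ⟨hWpos, hWx⟩ := hW x hx
  rw [exp_add, eq_div_iff hWpos.ne']
  linear_combination exp 1 * hWx

lemma tendsto_W_nhdsGT_zero : Tendsto W (𝓝[>] 0) (𝓝 0) := by
  refine tendsto_of_tendsto_of_tendsto_of_le_of_le' tendsto_const_nhds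
    (tendsto_nhdsWithin_of_tendsto_nhds tendsto_id) ?_ ?_
  all_goals filter_upwards [self_mem_nhdsWithin] with x (hx : 0 < x)
  · exact (hW x hx).1.le
  · obtain ⟨hWpos, hWx⟩ := hW x hx
    calc W x ≤ W x * exp (W x) := le_mul_of_one_le_right hWpos.le (one_le_exp hWpos.le)
      _ = x := hWx

lemma div_eq_log_iff_eq {a β : ℝ} (ha : 1 < a) (hβ : 1 < β) :
    a * β / (1 + a * (β - 1)) = log (1 + a * (β - 1)) ↔
      β = (a - 1 + exp (W ((a - 1) / exp 1) + 1)) / a := by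
  have ht : 0 < 1 + a * (β - 1) := by nlinarith
  have hx : 0 < (a - 1) / exp 1 := div_pos (by linarith) (exp_pos 1)
  rw [div_eq_log_iff_mul_log_sub_one_eq ht, mul_log_sub_one_eq_iff ht, mul_exp_eq_iff_eq_W hW hx,
    sub_eq_iff_eq_add, ← exp_eq_exp, exp_log ht,
    eq_div_iff_one_add_mul_sub_one_eq (by positivity : a ≠ 0)]

lemma one_sub_inv_mul_one_add_inv_W {a : ℝ} (ha : 1 < a) :
    (1 - 1 / a) * (1 + 1 / W ((a - 1) / exp 1)) =
      (a - 1 + exp (W ((a - 1) / exp 1) + 1)) / a := by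
  have hx : 0 < (a - 1) / exp 1 := div_pos (by linarith) (exp_pos 1)
  have hWpos := (hW _ hx).1
  rw [exp_W_add_one hW hx]
  field_simp

end LambertW

/-- Proposition 2 (optimal ZF user load via Lambert W): let `W` be the (principal branch of the)
Lambert W function, characterized on `(0,∞)` by `W x > 0` and `W x · e^{W x} = x`.
For `a > 1` and `x = (a−1)/e`, `β* = (1 − 1/a)(1 + 1/W(x))` is the unique `β > 1` solving
`aβ/(1 + a(β−1)) = ln(1 + a(β−1))`; moreover `β* → e` as `a → 1⁺`. -/
theorem zf_optimal_load_lambertW (W : ℝ → ℝ)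
    (hW : ∀ x : ℝ, 0 < x → 0 < W x ∧ W x * Real.exp (W x) = x) :
    (∀ a : ℝ, 1 < a →
      ∀ β : ℝ, 1 < β →
        (a * β / (1 + a * (β - 1)) = Real.log (1 + a * (β - 1)) ↔
          β = (1 - 1 / a) * (1 + 1 / W ((a - 1) / Real.exp 1)))) ∧
    Tendsto (fun a : ℝ => (1 - 1 / a) * (1 + 1 / W ((a - 1) / Real.exp 1)))
      (nhdsWithin 1 (Ioi 1)) (nhds (Real.exp 1)) := by
  have hW0 : Tendsto (fun a : ℝ => W ((a - 1) / exp 1)) (𝓝[>] 1) (𝓝 0) := by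
    refine (tendsto_W_nhdsGT_zero hW).comp (tendsto_nhdsWithin_of_tendsto_nhds_of_eventually_within
      _ ?_ ?_)
    · exact (Continuous.tendsto' (by fun_prop) 1 0 (by simp)).mono_left nhdsWithin_le_nhds
    · filter_upwards [self_mem_nhdsWithin] with a (ha : 1 < a)
      exact div_pos (sub_pos.2 ha) (exp_pos 1)
  have hid : Tendsto (fun a : ℝ => a) (𝓝[>] 1) (𝓝 1) := tendsto_nhdsWithin_of_tendsto_nhds tendsto_id
  have hlim := ((hid.sub_const 1).add (hW0.add_const 1).rexp).div hid one_ne_zero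
  rw [sub_self, zero_add, zero_add, div_one] at hlim
  refine ⟨fun a ha β hβ => ?_, hlim.congr' ?_⟩
  · rw [one_sub_inv_mul_one_add_inv_W hW ha]
    exact div_eq_log_iff_eq hW ha hβ
  · filter_upwards [self_mem_nhdsWithin] with a (ha : 1 < a)
    exact (one_sub_inv_mul_one_add_inv_W hW ha).symm
end

section
/- Let T > 0, K > 0 with K ≤ T/2, and constants c₁, c₂, c₃ > 0. The function f(t) = (1 − t/T)·log₂(1 + c₁t/(1 + c₂t + c₃)) is strictly concave on [K, T]. -/
/-!
The prelog factor `1 - t / T` is affine, nonnegative and strictly decreasing on `[K, T]`; the rate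
`t ↦ log₂ (1 + c₁ t / ((1 + c₃) + c₂ t))` is concave (a concave increasing function of a concave
linear-fractional map), nonnegative and strictly increasing for `t ≥ 0`. A product of nonnegative
concave functions varying in opposite directions is concave by Chebyshev's rearrangement
inequality, strictly so when both vary strictly:
`a f x g x + b f y g y = (a f x + b f y) (a g x + b g y) - a b (f x - f y) (g y - g x)`.
-/

open Set

section ProductOfConcave

variable {𝕜 E : Type*} [CommRing 𝕜] [LinearOrder 𝕜] [IsStrictOrderedRing 𝕜]
  [AddCommMonoid E] [LinearOrder E] [Module 𝕜 E] {s : Set E} {f g : E → 𝕜}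

theorem ConcaveOn.strictConcaveOn_mul_of_strictAntiOn_of_strictMonoOn
    (hf : ConcaveOn 𝕜 s f) (hg : ConcaveOn 𝕜 s g)
    (hf₀ : ∀ ⦃x⦄, x ∈ s → 0 ≤ f x) (hg₀ : ∀ ⦃x⦄, x ∈ s → 0 ≤ g x)
    (hf' : StrictAntiOn f s) (hg' : StrictMonoOn g s) :
    StrictConcaveOn 𝕜 s (f * g) := by
  refine ⟨hf.1, fun x hx y hy hxy a b ha hb hab => ?_⟩
  have hcross : 0 < (f x - f y) * (g y - g x) := by
    rcases hxy.lt_or_gt with h | h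
    · exact mul_pos (sub_pos.2 (hf' hx hy h)) (sub_pos.2 (hg' hx hy h))
    · exact mul_pos_of_neg_of_neg (sub_neg.2 (hf' hy hx h)) (sub_neg.2 (hg' hy hx h))
  have hfz := hf.2 hx hy ha.le hb.le hab
  have hgz := hg.2 hx hy ha.le hb.le hab
  simp only [Pi.mul_apply, smul_eq_mul] at hfz hgz ⊢
  calc a * (f x * g x) + b * (f y * g y)
      = (a * f x + b * f y) * (a * g x + b * g y) - a * b * ((f x - f y) * (g y - g x)) := by
        linear_combination (-(a * (f x * g x) + b * (f y * g y))) * hab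
    _ < (a * f x + b * f y) * (a * g x + b * g y) :=
        sub_lt_self _ (mul_pos (mul_pos ha hb) hcross)
    _ ≤ f (a • x + b • y) * g (a • x + b • y) :=
        mul_le_mul hfz hgz (by have := hg₀ hx; have := hg₀ hy; positivity)
          (hf₀ (hf.1 hx hy ha.le hb.le hab))

end ProductOfConcave

theorem ConcaveOn.comp_of_mapsTo {𝕜 E F β : Type*} [Semiring 𝕜] [PartialOrder 𝕜]
    [AddCommMonoid E] [AddCommMonoid F] [AddCommMonoid β] [PartialOrder F] [PartialOrder β]
    [Module 𝕜 E] [Module 𝕜 F] [SMul 𝕜 β] {s : Set E} {t : Set F} {f : E → F} {g : F → β}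
    (hg : ConcaveOn 𝕜 t g) (hf : ConcaveOn 𝕜 s f) (hg' : MonotoneOn g t) (hst : MapsTo f s t) :
    ConcaveOn 𝕜 s (g ∘ f) :=
  ⟨hf.1, fun _ hx _ hy _ _ ha hb hab =>
    (hg.2 (hst hx) (hst hy) ha hb hab).trans <|
      hg' (hg.1 (hst hx) (hst hy) ha hb hab) (hst (hf.1 hx hy ha hb hab)) (hf.2 hx hy ha hb hab)⟩

namespace Real

theorem concaveOn_logb_Ioi {b : ℝ} (hb : 1 ≤ b) : ConcaveOn ℝ (Ioi 0) (logb b) := by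
  have hlog : logb b = (log b)⁻¹ • log := by
    funext x
    simp only [logb, Pi.smul_apply, smul_eq_mul, div_eq_inv_mul]
  rw [hlog]
  exact strictConcaveOn_log_Ioi.concaveOn.smul (inv_nonneg.2 (log_nonneg hb))

end Real

section LinearFractional

variable {p d q : ℝ}

theorem concaveOn_mul_div_add_mul (hp : 0 ≤ p) (hd : 0 < d) (hq : 0 ≤ q) :
    ConcaveOn ℝ (Ici 0) (fun t => p * t / (d + q * t)) := by
  refine ⟨convex_Ici 0, fun x hx y hy a b ha hb hab => ?_⟩
  simp only [mem_Ici, smul_eq_mul] at hx hy ⊢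
  obtain rfl : b = 1 - a := by linarith
  have key : p * (a * x + (1 - a) * y) / (d + q * (a * x + (1 - a) * y))
      - (a * (p * x / (d + q * x)) + (1 - a) * (p * y / (d + q * y)))
      = a * (1 - a) * p * d * q * (x - y) ^ 2
        / ((d + q * x) * (d + q * y) * (d + q * (a * x + (1 - a) * y))) := by
    field_simp
    ring
  rw [← sub_nonneg, key]
  positivity

theorem strictMonoOn_mul_div_add_mul (hp : 0 < p) (hd : 0 < d) (hq : 0 ≤ q) :
    StrictMonoOn (fun t => p * t / (d + q * t)) (Ici 0) := by
  intro x hx y hy hxy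
  simp only [mem_Ici] at hx hy
  rw [div_lt_div_iff₀ (by positivity) (by positivity)]
  nlinarith [mul_pos (mul_pos hp hd) (sub_pos.2 hxy)]

theorem one_le_one_add_mul_div_add_mul (hp : 0 ≤ p) (hd : 0 < d) (hq : 0 ≤ q) {t : ℝ}
    (ht : 0 ≤ t) : 1 ≤ 1 + p * t / (d + q * t) :=
  le_add_of_nonneg_right (by positivity)

theorem concaveOn_logb_one_add_mul_div_add_mul {b : ℝ} (hb : 1 < b) (hp : 0 ≤ p) (hd : 0 < d)
    (hq : 0 ≤ q) : ConcaveOn ℝ (Ici 0) (fun t => Real.logb b (1 + p * t / (d + q * t))) :=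
  (Real.concaveOn_logb_Ioi hb.le).comp_of_mapsTo
    ((concaveOn_const 1 (convex_Ici 0)).add (concaveOn_mul_div_add_mul hp hd hq))
    (Real.strictMonoOn_logb hb).monotoneOn
    fun _ ht => zero_lt_one.trans_le (one_le_one_add_mul_div_add_mul hp hd hq ht)

theorem strictMonoOn_logb_one_add_mul_div_add_mul {b : ℝ} (hb : 1 < b) (hp : 0 < p) (hd : 0 < d)
    (hq : 0 ≤ q) : StrictMonoOn (fun t => Real.logb b (1 + p * t / (d + q * t))) (Ici 0) :=
  fun _ hx _ hy hxy => Real.logb_lt_logb hb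
    (zero_lt_one.trans_le (one_le_one_add_mul_div_add_mul hp.le hd hq hx))
    (add_lt_add_right (strictMonoOn_mul_div_add_mul hp hd hq hx hy hxy) 1)

end LinearFractional

theorem zf_training_rate_strict_concave_general (T K c₁ c₂ c₃ : ℝ)
    (hT : 0 < T) (hK : 0 < K)
    (hc₁ : 0 < c₁) (hc₂ : 0 < c₂) (hc₃ : 0 < c₃) :
    StrictConcaveOn ℝ (Icc K T)
      (fun t => (1 - t / T) * Real.logb 2 (1 + c₁ * t / (1 + c₂ * t + c₃))) := by
  have hsub : Icc K T ⊆ Ici 0 := fun t ht => (hK.trans_le ht.1).le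
  have hd : 0 < 1 + c₃ := by positivity
  have hprelog : ConcaveOn ℝ (Icc K T) (fun t => 1 - t / T) :=
    ⟨convex_Icc K T, fun x _ y _ a b _ _ hab => by
      simp only [smul_eq_mul]
      linear_combination hab⟩
  have hden : ∀ t, 1 + c₂ * t + c₃ = (1 + c₃) + c₂ * t := fun t => by ring
  simp only [hden]
  exact hprelog.strictConcaveOn_mul_of_strictAntiOn_of_strictMonoOn
    ((concaveOn_logb_one_add_mul_div_add_mul one_lt_two hc₁.le hd hc₂.le).subset hsub
      (convex_Icc K T))
    (fun t ht => sub_nonneg.2 ((div_le_one hT).2 ht.2))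
    (fun t ht => Real.logb_nonneg one_lt_two
      (one_le_one_add_mul_div_add_mul hc₁.le hd hc₂.le (hsub ht)))
    (fun x _ y _ hxy => sub_lt_sub_left (div_lt_div_of_pos_right hxy hT) 1)
    ((strictMonoOn_logb_one_add_mul_div_add_mul one_lt_two hc₁ hd hc₂.le).mono hsub)

/-- Strict concavity of the normalized ZF sum rate in the training length: for `T > 0`,
`0 < K ≤ T/2` and constants `c₁, c₂, c₃ > 0`, the function
`t ↦ (1 − t/T) log₂(1 + c₁ t/(1 + c₂ t + c₃))` is strictly concave on `[K, T]`. -/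
theorem zf_training_rate_strict_concave (T K c₁ c₂ c₃ : ℝ)
    (hT : 0 < T) (hK : 0 < K) (hKT : K ≤ T / 2)
    (hc₁ : 0 < c₁) (hc₂ : 0 < c₂) (hc₃ : 0 < c₃) :
    StrictConcaveOn ℝ (Icc K T)
      (fun t => (1 - t / T) * Real.logb 2 (1 + c₁ * t / (1 + c₂ * t + c₃))) :=
  zf_training_rate_strict_concave_general T K c₁ c₂ c₃ hT hK hc₁ hc₂ hc₃
end
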